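/- arXiv:1511.08190 — 4 statements merged into one kernel-verified Lean document; each statement's English description precedes it below -/
import Mathlib

section
/- Second-moment formula of the exceedance process (Proposition on the autocovariance structure): in the slice model with κ > 0, ∫₀^∞ ∫₀^∞ x₀ x_h [ ∫_{ℝ³} Λ₀ Λₕ exp(−Λ₀(κ+x₀) − Λₕ(κ+x_h)) dμ ] dx₀ dx_h = ∫_κ^∞ ∫_κ^∞ (1 + u₀/β)^{−b₀} (1 + (u₀+u_h)/β)^{−b₀ₕ} (1 + u_h/β)^{−bₕ} du₀ du_h. Equivalently, ∫_{ℝ³} e^{−κ(Λ₀+Λₕ)}/(Λ₀Λₕ) dμ equals the same double integral; this is the quantity E[X₀X_h] of the latent trawl model. -/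
open MeasureTheory ProbabilityTheory Real Set

/-!
All three quantities equal `E[e^{-κΛ₀}/Λ₀ · e^{-κΛₕ}/Λₕ]`. On the left,
`∫₀^∞ x Λ e^{-Λ(κ+x)} dx = e^{-κΛ}/Λ`; on the right, `e^{-κΛ}/Λ = ∫_κ^∞ e^{-uΛ} du`, and
`E[e^{-u₀Λ₀ - uₕΛₕ}] = E[e^{-u₀S₀}] E[e^{-(u₀+uₕ)S₀ₕ}] E[e^{-uₕSₕ}]` is the integrand, by
independence of the slices and the Laplace transform of the Gamma law. Tonelli does the rest in
`ℝ≥0∞`.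

The Bochner integrals follow the `ℝ≥0∞` ones even when these diverge: after the inner integration
the outer integrand is `E[φ(Λ₀) e^{-κΛₕ}/Λₕ]` with `0 < φ ≤ 1`, which is finite exactly when
`E[e^{-κΛₕ}/Λₕ]` is, since a divergence can only come from small `Λₕ`, hence small `S₀ₕ`, where
`Λ₀ ≈ S₀` is independent of `Λₕ`. So the outer integrand is finite everywhere or infinite
everywhere, and in the second case both sides are `0`.
-/

/-- The slice measure: product of three Gamma distributions with shapes
`b₀, b₀ₕ, bₕ` and common rate `β`. -/
noncomputable def sliceMeasure (b₀ b₀ₕ bₕ β : ℝ) : Measure (ℝ × ℝ × ℝ) :=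
  (gammaMeasure b₀ β).prod ((gammaMeasure b₀ₕ β).prod (gammaMeasure bₕ β))

open scoped ENNReal

section Lintegral

variable {α β : Type*} [MeasurableSpace α] [MeasurableSpace β] {μ : Measure α} {ν : Measure β}

theorem integral_toReal_of_ae_lt_top_iff {f : α → ℝ≥0∞} {c : ℝ≥0∞} (hf : AEMeasurable f μ)
    (hμ : μ ≠ 0) (h : ∀ᵐ x ∂μ, f x < ∞ ↔ c < ∞) :
    ∫ x, (f x).toReal ∂μ = (∫⁻ x, f x ∂μ).toReal := by
  by_cases hc : c < ∞
  · exact integral_toReal hf (by filter_upwards [h] with x hx using hx.2 hc)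
  · have hf_top : f =ᵐ[μ] fun _ ↦ ∞ := by
      filter_upwards [h] with x hx using not_lt_top_iff.mp (hx.not.2 hc)
    have hf_toReal : (fun x ↦ (f x).toReal) =ᵐ[μ] 0 := by
      filter_upwards [hf_top] with x hx
      simp [hx]
    rw [integral_congr_ae hf_toReal, lintegral_congr_ae hf_top, lintegral_const,
      ENNReal.top_mul (Measure.measure_univ_ne_zero.2 hμ)]
    simp

theorem lintegral_lintegral_swap_const_mul [SFinite μ] [SFinite ν] {f : β → ℝ≥0∞}
    {g : α → β → ℝ≥0∞} (hf : Measurable f) (hg : Measurable (Function.uncurry g)) :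
    ∫⁻ x, ∫⁻ y, f y * g x y ∂ν ∂μ = ∫⁻ y, f y * ∫⁻ x, g x y ∂μ ∂ν := by
  rw [lintegral_lintegral_swap (by fun_prop)]
  exact lintegral_congr fun y ↦ lintegral_const_mul _ (hg.comp measurable_prodMk_right)

theorem lintegral_lintegral_swap_mul_const [SFinite μ] [SFinite ν] {f : β → ℝ≥0∞}
    {g : α → β → ℝ≥0∞} (hf : Measurable f) (hg : Measurable (Function.uncurry g)) :
    ∫⁻ x, ∫⁻ y, g x y * f y ∂ν ∂μ = ∫⁻ y, (∫⁻ x, g x y ∂μ) * f y ∂ν := by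
  simp_rw [mul_comm _ (f _)]
  exact lintegral_lintegral_swap_const_mul hf hg

end Lintegral

theorem mul_mul_exp_neg_mul_add_le_one {κ x t : ℝ} (hκ : 0 ≤ κ) (ht : 0 ≤ t) :
    x * t * exp (-t * (κ + x)) ≤ 1 := by
  calc x * t * exp (-t * (κ + x)) ≤ exp (t * x) * exp (-(t * x)) := by
        rw [mul_comm x t]
        gcongr
        · linarith [add_one_le_exp (t * x)]
        · nlinarith
    _ = 1 := by rw [← exp_add, add_neg_cancel, exp_zero]

theorem exp_neg_mul_div_le_one {κ t : ℝ} (hκ : 0 ≤ κ) (ht : 1 ≤ t) : exp (-(κ * t)) / t ≤ 1 :=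
  (div_le_one (by linarith)).2 ((exp_le_one_iff.2 (by nlinarith)).trans ht)

theorem lintegral_Ioi_exp_neg_mul {t : ℝ} (ht : 0 < t) (κ : ℝ) :
    ∫⁻ u in Ioi κ, ENNReal.ofReal (exp (-(u * t))) = ENNReal.ofReal (exp (-(κ * t)) / t) := by
  simp_rw [neg_mul_eq_mul_neg, mul_comm _ (-t)]
  rw [← ofReal_integral_eq_lintegral_ofReal (integrableOn_exp_mul_Ioi (neg_lt_zero.2 ht) κ)
    (ae_of_all _ fun _ ↦ (exp_pos _).le), integral_exp_mul_Ioi (neg_lt_zero.2 ht) κ,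
    neg_div_neg_eq]

theorem lintegral_Ioi_mul_mul_exp_neg_mul_add {t : ℝ} (ht : 0 < t) (κ : ℝ) :
    ∫⁻ x in Ioi 0, ENNReal.ofReal (x * t * exp (-t * (κ + x)))
      = ENNReal.ofReal (exp (-(κ * t)) / t) := by
  have hint : IntegrableOn (fun x : ℝ ↦ x * exp (-(t * x))) (Ioi 0) := by
    simpa using integrableOn_rpow_mul_exp_neg_mul_rpow (s := 1) (p := 1) (by norm_num) one_pos ht
  have hval : ∫ x in Ioi 0, x * exp (-(t * x)) = 1 / t ^ 2 := by
    have h := integral_rpow_mul_exp_neg_mul_Ioi (a := 2) two_pos ht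
    norm_num at h
    simpa using h
  have hsplit : ∀ x, x * t * exp (-t * (κ + x)) = t * exp (-(κ * t)) * (x * exp (-(t * x))) :=
    fun x ↦ by rw [show -t * (κ + x) = -(κ * t) + -(t * x) by ring, exp_add]; ring
  have hnonneg : 0 ≤ᵐ[volume.restrict (Ioi 0)] fun x : ℝ ↦ x * exp (-(t * x)) := by
    filter_upwards [ae_restrict_mem measurableSet_Ioi] with x hx
    exact mul_nonneg (le_of_lt hx) (exp_pos _).le
  simp_rw [hsplit, ENNReal.ofReal_mul (by positivity : 0 ≤ t * exp (-(κ * t)))]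
  rw [lintegral_const_mul' _ _ ENNReal.ofReal_ne_top,
    ← ofReal_integral_eq_lintegral_ofReal hint hnonneg, hval, ← ENNReal.ofReal_mul (by positivity)]
  congr 1
  field_simp

section Gamma

variable {a r : ℝ}

instance : SFinite (gammaMeasure a r) := by
  rw [gammaMeasure]
  infer_instance

theorem measurable_gammaPDF : Measurable (gammaPDF a r) :=
  (measurable_gammaPDFReal a r).ennreal_ofReal

theorem gammaMeasure_ae_pos : ∀ᵐ x ∂gammaMeasure a r, 0 < x := by
  rw [ae_iff, show {x : ℝ | ¬0 < x} = Iic 0 by ext; simp, gammaMeasure,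
    withDensity_apply _ measurableSet_Iic, setLIntegral_congr Iio_ae_eq_Iic.symm]
  exact lintegral_gammaPDF_of_nonpos le_rfl

theorem gammaMeasure_ne_zero_of_subset_Ioi (ha : 0 < a) (hr : 0 < r) {s : Set ℝ}
    (hs : MeasurableSet s) (hs_pos : s ⊆ Ioi 0) (hs_vol : volume s ≠ 0) :
    gammaMeasure a r s ≠ 0 := by
  rw [gammaMeasure, withDensity_apply _ hs, Ne,
    lintegral_eq_zero_iff measurable_gammaPDF]
  intro h_zero
  have h_pos : ∀ᵐ x ∂volume.restrict s, gammaPDF a r x ≠ 0 := by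
    filter_upwards [ae_restrict_mem hs] with x hx
    exact ENNReal.ofReal_ne_zero_iff.2 (gammaPDFReal_pos ha hr (hs_pos hx))
  have h_false : ∀ᵐ _ ∂volume.restrict s, False := by
    filter_upwards [h_pos, h_zero] with x hx hx' using hx hx'
  exact hs_vol <| Measure.restrict_eq_zero.1 <| ae_eq_bot.1 <|
    Filter.eventually_false_iff_eq_bot.1 h_false

theorem gammaPDF_mul_exp_neg_mul (ha : 0 < a) (hr : 0 < r) {t : ℝ} (hrt : 0 < r + t) (x : ℝ) :
    gammaPDF a r x * ENNReal.ofReal (exp (-(t * x)))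
      = ENNReal.ofReal ((r / (r + t)) ^ a) * gammaPDF a (r + t) x := by
  rcases le_or_gt 0 x with hx | hx
  · rw [gammaPDF_of_nonneg hx, gammaPDF_of_nonneg hx, ← ENNReal.ofReal_mul (by positivity),
      ← ENNReal.ofReal_mul (by positivity)]
    have h_rpow : (r / (r + t)) ^ a * (r + t) ^ a = r ^ a := by
      rw [← mul_rpow (by positivity) hrt.le, div_mul_cancel₀ _ hrt.ne']
    rw [← h_rpow, show -((r + t) * x) = -(r * x) + -(t * x) by ring, exp_add]
    ring_nf
  · rw [gammaPDF_of_neg hx, gammaPDF_of_neg hx]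
    simp

theorem lintegral_exp_neg_mul_gammaMeasure (ha : 0 < a) (hr : 0 < r) {t : ℝ} (ht : -r < t) :
    ∫⁻ x, ENNReal.ofReal (exp (-(t * x))) ∂gammaMeasure a r
      = ENNReal.ofReal ((1 + t / r) ^ (-a)) := by
  have hrt : 0 < r + t := by linarith
  rw [gammaMeasure, lintegral_withDensity_eq_lintegral_mul _ measurable_gammaPDF (by fun_prop)]
  simp only [Pi.mul_apply, gammaPDF_mul_exp_neg_mul ha hr hrt]
  rw [lintegral_const_mul _ measurable_gammaPDF,
    lintegral_gammaPDF_eq_one ha hrt, mul_one, show 1 + t / r = (r + t) / r by field_simp,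
    rpow_neg (by positivity), ← inv_rpow (by positivity), inv_div]

end Gamma

section Slice

variable {β b₀ b₀ₕ bₕ κ : ℝ}

theorem isProbabilityMeasure_sliceMeasure (hβ : 0 < β) (hb₀ : 0 < b₀) (hb₀ₕ : 0 < b₀ₕ)
    (hbₕ : 0 < bₕ) : IsProbabilityMeasure (sliceMeasure b₀ b₀ₕ bₕ β) := by
  have := isProbabilityMeasure_gammaMeasure hb₀ hβ
  have := isProbabilityMeasure_gammaMeasure hb₀ₕ hβ
  have := isProbabilityMeasure_gammaMeasure hbₕ hβ
  rw [sliceMeasure]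
  infer_instance

instance : SFinite (sliceMeasure b₀ b₀ₕ bₕ β) := by
  rw [sliceMeasure]
  infer_instance

theorem sliceMeasure_ae_pos :
    ∀ᵐ s ∂sliceMeasure b₀ b₀ₕ bₕ β, 0 < s.1 ∧ 0 < s.2.1 ∧ 0 < s.2.2 := by
  rw [sliceMeasure]
  exact (Measure.quasiMeasurePreserving_fst.ae gammaMeasure_ae_pos).and
    (Measure.quasiMeasurePreserving_snd.ae
      ((Measure.quasiMeasurePreserving_fst.ae gammaMeasure_ae_pos).and
        (Measure.quasiMeasurePreserving_snd.ae gammaMeasure_ae_pos)))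

noncomputable def sliceLaplace (b₀ b₀ₕ bₕ β u v : ℝ) : ℝ :=
  (1 + u / β) ^ (-b₀) * (1 + (u + v) / β) ^ (-b₀ₕ) * (1 + v / β) ^ (-bₕ)

theorem lintegral_exp_neg_sliceMeasure (hβ : 0 < β) (hb₀ : 0 < b₀) (hb₀ₕ : 0 < b₀ₕ)
    (hbₕ : 0 < bₕ) {u v : ℝ} (hu : 0 ≤ u) (hv : 0 ≤ v) :
    ∫⁻ s, ENNReal.ofReal (exp (-(u * (s.1 + s.2.1))))
        * ENNReal.ofReal (exp (-(v * (s.2.1 + s.2.2)))) ∂sliceMeasure b₀ b₀ₕ bₕ β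
      = ENNReal.ofReal (sliceLaplace b₀ b₀ₕ bₕ β u v) := by
  have h_split : ∀ s : ℝ × ℝ × ℝ,
      ENNReal.ofReal (exp (-(u * (s.1 + s.2.1)))) * ENNReal.ofReal (exp (-(v * (s.2.1 + s.2.2))))
        = ENNReal.ofReal (exp (-(u * s.1))) * (ENNReal.ofReal (exp (-((u + v) * s.2.1)))
            * ENNReal.ofReal (exp (-(v * s.2.2)))) := fun s ↦ by
    simp only [← ENNReal.ofReal_mul (exp_pos _).le, ← exp_add]
    ring_nf
  simp_rw [h_split]
  rw [sliceMeasure, lintegral_prod_mul (f := fun x ↦ ENNReal.ofReal (exp (-(u * x))))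
      (g := fun p : ℝ × ℝ ↦
        ENNReal.ofReal (exp (-((u + v) * p.1))) * ENNReal.ofReal (exp (-(v * p.2))))
      (by fun_prop) (by fun_prop),
    lintegral_prod_mul (f := fun y ↦ ENNReal.ofReal (exp (-((u + v) * y))))
      (g := fun z ↦ ENNReal.ofReal (exp (-(v * z)))) (by fun_prop) (by fun_prop),
    lintegral_exp_neg_mul_gammaMeasure hb₀ hβ (by linarith),
    lintegral_exp_neg_mul_gammaMeasure hb₀ₕ hβ (by linarith),
    lintegral_exp_neg_mul_gammaMeasure hbₕ hβ (by linarith), sliceLaplace,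
    ENNReal.ofReal_mul (by positivity), ENNReal.ofReal_mul (by positivity), mul_assoc]

theorem lintegral_comp_snd_sliceMeasure (hβ : 0 < β) (hb₀ : 0 < b₀) {h : ℝ × ℝ → ℝ≥0∞}
    (hh : Measurable h) :
    ∫⁻ s, h s.2 ∂sliceMeasure b₀ b₀ₕ bₕ β
      = ∫⁻ p, h p ∂(gammaMeasure b₀ₕ β).prod (gammaMeasure bₕ β) := by
  have := isProbabilityMeasure_gammaMeasure hb₀ hβ
  rw [sliceMeasure, lintegral_prod (fun s : ℝ × ℝ × ℝ ↦ h s.2) (by fun_prop)]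
  simp

-- Where `S₀ ∈ [1, 2]` and `S₀ₕ ≤ 1`, `Λ₀ ∈ [1, 3]`, so the integrand dominates a product of
-- a function of `S₀` and one of `(S₀ₕ, Sₕ)`.
theorem mul_setLIntegral_le_lintegral_sliceMeasure {φ ψ : ℝ → ℝ≥0∞} {c : ℝ≥0∞}
    (hc : ∀ t ∈ Icc 1 3, c ≤ φ t) (hψ : Measurable ψ) :
    c * gammaMeasure b₀ β (Icc 1 2) * ∫⁻ p in {p : ℝ × ℝ | p.1 ≤ 1}, ψ (p.1 + p.2)
        ∂(gammaMeasure b₀ₕ β).prod (gammaMeasure bₕ β)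
      ≤ ∫⁻ s, φ (s.1 + s.2.1) * ψ (s.2.1 + s.2.2) ∂sliceMeasure b₀ b₀ₕ bₕ β := by
  have hS : MeasurableSet {p : ℝ × ℝ | p.1 ≤ 1} := measurableSet_le measurable_fst measurable_const
  rw [← lintegral_indicator_const measurableSet_Icc, ← lintegral_indicator hS, sliceMeasure,
    ← lintegral_prod_mul (f := (Icc 1 2).indicator fun _ ↦ c)
      (g := {p : ℝ × ℝ | p.1 ≤ 1}.indicator fun p ↦ ψ (p.1 + p.2))
      (measurable_const.indicator measurableSet_Icc).aemeasurable
      ((hψ.comp (by fun_prop)).indicator hS).aemeasurable]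
  refine lintegral_mono_ae ?_
  filter_upwards [sliceMeasure_ae_pos] with s hs
  simp only [indicator_apply, mem_Icc, mem_ofPred_eq]
  split_ifs with h₀ h₁
  · exact mul_le_mul_left (hc _ ⟨by linarith, by linarith⟩) _
  all_goals simp

theorem lintegral_sliceMeasure_lt_top_iff (hβ : 0 < β) (hb₀ : 0 < b₀) (hb₀ₕ : 0 < b₀ₕ)
    (hbₕ : 0 < bₕ) {φ ψ : ℝ → ℝ≥0∞} {C : ℝ≥0∞} (hφ_le : ∀ t, 0 < t → φ t ≤ 1)
    (hφ_pos : ∃ c ≠ 0, ∀ t ∈ Icc 1 3, c ≤ φ t) (hψ : Measurable ψ)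
    (hψ_le : ∀ t, 1 < t → ψ t ≤ C) (hC : C ≠ ∞) :
    ∫⁻ s, φ (s.1 + s.2.1) * ψ (s.2.1 + s.2.2) ∂sliceMeasure b₀ b₀ₕ bₕ β < ∞
      ↔ ∫⁻ s, ψ (s.2.1 + s.2.2) ∂sliceMeasure b₀ b₀ₕ bₕ β < ∞ := by
  have := isProbabilityMeasure_gammaMeasure hb₀ₕ hβ
  have := isProbabilityMeasure_gammaMeasure hbₕ hβ
  set ν := (gammaMeasure b₀ₕ β).prod (gammaMeasure bₕ β)
  set S := {p : ℝ × ℝ | p.1 ≤ 1}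
  have hS : MeasurableSet S := measurableSet_le measurable_fst measurable_const
  constructor
  · intro h
    obtain ⟨c, hc_ne, hc⟩ := hφ_pos
    have h_near : ∫⁻ p in S, ψ (p.1 + p.2) ∂ν < ∞ :=
      ENNReal.lt_top_of_mul_ne_top_right
        ((mul_setLIntegral_le_lintegral_sliceMeasure hc hψ).trans_lt h).ne
        (mul_ne_zero hc_ne (gammaMeasure_ne_zero_of_subset_Ioi hb₀ hβ measurableSet_Icc
          (fun t ht ↦ by simp only [mem_Ioi]; linarith [ht.1]) (by simp)))
    have h_far : ∫⁻ p in Sᶜ, ψ (p.1 + p.2) ∂ν ≤ C :=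
      calc ∫⁻ p in Sᶜ, ψ (p.1 + p.2) ∂ν ≤ ∫⁻ _ in Sᶜ, C ∂ν := by
            refine setLIntegral_mono_ae' hS.compl ?_
            filter_upwards [Measure.quasiMeasurePreserving_snd.ae gammaMeasure_ae_pos]
              with p hp hp₁
            exact hψ_le _ (by linarith [not_le.1 (show ¬p.1 ≤ 1 from hp₁)])
        _ ≤ C := by
            rw [setLIntegral_const]
            exact mul_le_of_le_one_right' prob_le_one
    rw [lintegral_comp_snd_sliceMeasure hβ hb₀ (h := fun p ↦ ψ (p.1 + p.2)) (by fun_prop),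
      ← lintegral_add_compl _ hS]
    exact ENNReal.add_lt_top.2 ⟨h_near, h_far.trans_lt hC.lt_top⟩
  · refine fun h ↦ lt_of_le_of_lt (lintegral_mono_ae ?_) h
    filter_upwards [sliceMeasure_ae_pos] with s hs
    exact mul_le_of_le_one_left (by positivity) (hφ_le _ (add_pos hs.1 hs.2.1))

theorem integral_toReal_lintegral_sliceMeasure (hβ : 0 < β) (hb₀ : 0 < b₀) (hb₀ₕ : 0 < b₀ₕ)
    (hbₕ : 0 < bₕ) {S : Set ℝ} (hS : MeasurableSet S) (hS_vol : volume S ≠ 0)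
    {φ : ℝ → ℝ → ℝ≥0∞} {χ ψ : ℝ → ℝ≥0∞} {C : ℝ≥0∞} (hφ : Measurable (Function.uncurry φ))
    (hφχ : ∀ t, 0 < t → ∫⁻ x in S, φ x t = χ t) (hφ_le : ∀ x ∈ S, ∀ t, 0 < t → φ x t ≤ 1)
    (hφ_pos : ∀ x ∈ S, ∃ c ≠ 0, ∀ t ∈ Icc 1 3, c ≤ φ x t) (hψ : Measurable ψ)
    (hψ_le : ∀ t, 1 < t → ψ t ≤ C) (hC : C ≠ ∞) :
    ∫ x in S, (∫⁻ s, φ x (s.1 + s.2.1) * ψ (s.2.1 + s.2.2) ∂sliceMeasure b₀ b₀ₕ bₕ β).toReal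
      = (∫⁻ s, χ (s.1 + s.2.1) * ψ (s.2.1 + s.2.2) ∂sliceMeasure b₀ b₀ₕ bₕ β).toReal := by
  have hφΛ : Measurable fun p : ℝ × ℝ × ℝ × ℝ ↦ φ p.1 (p.2.1 + p.2.2.1) :=
    hφ.comp (measurable_fst.prodMk (by fun_prop))
  have h_meas : Measurable fun x ↦
      ∫⁻ s, φ x (s.1 + s.2.1) * ψ (s.2.1 + s.2.2) ∂sliceMeasure b₀ b₀ₕ bₕ β :=
    Measurable.lintegral_prod_right'
      (f := fun p : ℝ × ℝ × ℝ × ℝ ↦ φ p.1 (p.2.1 + p.2.2.1) * ψ (p.2.2.1 + p.2.2.2))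
      (hφΛ.mul (by fun_prop))
  rw [integral_toReal_of_ae_lt_top_iff h_meas.aemeasurable (by simpa using hS_vol)
      (ae_restrict_of_forall_mem hS fun x hx ↦ lintegral_sliceMeasure_lt_top_iff hβ hb₀ hb₀ₕ
        hbₕ (hφ_le x hx) (hφ_pos x hx) hψ hψ_le hC),
    lintegral_lintegral_swap_mul_const (f := fun s : ℝ × ℝ × ℝ ↦ ψ (s.2.1 + s.2.2))
      (g := fun x s ↦ φ x (s.1 + s.2.1)) (hψ.comp (by fun_prop)) hφΛ]
  congr 1
  refine lintegral_congr_ae ?_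
  filter_upwards [sliceMeasure_ae_pos] with s hs
  rw [hφχ _ (add_pos hs.1 hs.2.1)]

theorem integral_integral_sliceLaplace (hβ : 0 < β) (hb₀ : 0 < b₀) (hb₀ₕ : 0 < b₀ₕ)
    (hbₕ : 0 < bₕ) (hκ : 0 < κ) :
    ∫ u₀ in Ioi κ, ∫ uₕ in Ioi κ, sliceLaplace b₀ b₀ₕ bₕ β u₀ uₕ
      = (∫⁻ s, ENNReal.ofReal (exp (-(κ * (s.1 + s.2.1))) / (s.1 + s.2.1))
          * ENNReal.ofReal (exp (-(κ * (s.2.1 + s.2.2))) / (s.2.1 + s.2.2))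
          ∂sliceMeasure b₀ b₀ₕ bₕ β).toReal := by
  have h_inner : ∀ u₀, 0 ≤ u₀ → ∫ uₕ in Ioi κ, sliceLaplace b₀ b₀ₕ bₕ β u₀ uₕ
      = (∫⁻ s, ENNReal.ofReal (exp (-(u₀ * (s.1 + s.2.1))))
          * ENNReal.ofReal (exp (-(κ * (s.2.1 + s.2.2))) / (s.2.1 + s.2.2))
          ∂sliceMeasure b₀ b₀ₕ bₕ β).toReal := by
    intro u₀ hu₀
    rw [integral_eq_lintegral_of_nonneg_ae ?_ (by unfold sliceLaplace; fun_prop),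
      ← setLIntegral_congr_fun measurableSet_Ioi fun uₕ huₕ ↦
        lintegral_exp_neg_sliceMeasure hβ hb₀ hb₀ₕ hbₕ hu₀ (hκ.le.trans (le_of_lt huₕ)),
      lintegral_lintegral_swap_const_mul (by fun_prop) (by fun_prop)]
    · congr 1
      refine lintegral_congr_ae ?_
      filter_upwards [sliceMeasure_ae_pos] with s hs
      rw [lintegral_Ioi_exp_neg_mul (add_pos hs.2.1 hs.2.2)]
    · filter_upwards [ae_restrict_mem measurableSet_Ioi] with uₕ (huₕ : κ < uₕ)
      have : 0 ≤ uₕ := by linarith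
      unfold sliceLaplace
      positivity
  rw [setIntegral_congr_fun measurableSet_Ioi fun u₀ hu₀ ↦
    h_inner u₀ (hκ.le.trans (le_of_lt hu₀))]
  refine integral_toReal_lintegral_sliceMeasure hβ hb₀ hb₀ₕ hbₕ measurableSet_Ioi (by simp)
    (φ := fun u t ↦ ENNReal.ofReal (exp (-(u * t)))) (by fun_prop)
    (fun t ht ↦ lintegral_Ioi_exp_neg_mul ht κ) (fun u (hu : κ < u) t ht ↦ ?_)
    (fun u (hu : κ < u) ↦ ?_) (by fun_prop)
    (fun t ht ↦ ENNReal.ofReal_le_one.2 (exp_neg_mul_div_le_one hκ.le ht.le)) ENNReal.one_ne_top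
  · exact ENNReal.ofReal_le_one.2 (exp_le_one_iff.2 (by nlinarith))
  · refine ⟨ENNReal.ofReal (exp (-(u * 3))), (ENNReal.ofReal_pos.2 (exp_pos _)).ne',
      fun t ht ↦ ENNReal.ofReal_le_ofReal (exp_le_exp.2 ?_)⟩
    nlinarith [ht.2]

theorem mul_mul_integral_sliceMeasure {x₀ xₕ : ℝ} (hx₀ : 0 ≤ x₀) (hxₕ : 0 ≤ xₕ) :
    x₀ * xₕ * ∫ s, (s.1 + s.2.1) * (s.2.1 + s.2.2) *
        exp (-(s.1 + s.2.1) * (κ + x₀) - (s.2.1 + s.2.2) * (κ + xₕ)) ∂sliceMeasure b₀ b₀ₕ bₕ β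
      = (∫⁻ s, ENNReal.ofReal (x₀ * (s.1 + s.2.1) * exp (-(s.1 + s.2.1) * (κ + x₀)))
          * ENNReal.ofReal (xₕ * (s.2.1 + s.2.2) * exp (-(s.2.1 + s.2.2) * (κ + xₕ)))
          ∂sliceMeasure b₀ b₀ₕ bₕ β).toReal := by
  rw [← integral_const_mul, integral_eq_lintegral_of_nonneg_ae ?_ (by fun_prop)]
  · congr 1
    refine lintegral_congr_ae ?_
    filter_upwards [sliceMeasure_ae_pos] with s hs
    have hΛ₀ : 0 < s.1 + s.2.1 := add_pos hs.1 hs.2.1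
    rw [← ENNReal.ofReal_mul (by positivity), sub_eq_add_neg, exp_add]
    ring_nf
  · filter_upwards [sliceMeasure_ae_pos] with s hs
    have hΛ₀ : 0 < s.1 + s.2.1 := add_pos hs.1 hs.2.1
    have hΛₕ : 0 < s.2.1 + s.2.2 := add_pos hs.2.1 hs.2.2
    positivity

theorem integral_mul_mul_integral_sliceMeasure (hβ : 0 < β) (hb₀ : 0 < b₀) (hb₀ₕ : 0 < b₀ₕ)
    (hbₕ : 0 < bₕ) (hκ : 0 < κ) {x₀ : ℝ} (hx₀ : 0 ≤ x₀) :
    ∫ xₕ in Ioi (0 : ℝ), x₀ * xₕ * ∫ s, (s.1 + s.2.1) * (s.2.1 + s.2.2) *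
        exp (-(s.1 + s.2.1) * (κ + x₀) - (s.2.1 + s.2.2) * (κ + xₕ)) ∂sliceMeasure b₀ b₀ₕ bₕ β
      = (∫⁻ s, ENNReal.ofReal (x₀ * (s.1 + s.2.1) * exp (-(s.1 + s.2.1) * (κ + x₀)))
          * ENNReal.ofReal (exp (-(κ * (s.2.1 + s.2.2))) / (s.2.1 + s.2.2))
          ∂sliceMeasure b₀ b₀ₕ bₕ β).toReal := by
  have := isProbabilityMeasure_sliceMeasure hβ hb₀ hb₀ₕ hbₕ
  have h_fin : ∀ xₕ, ∫⁻ s, ENNReal.ofReal (x₀ * (s.1 + s.2.1) * exp (-(s.1 + s.2.1) * (κ + x₀)))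
        * ENNReal.ofReal (xₕ * (s.2.1 + s.2.2) * exp (-(s.2.1 + s.2.2) * (κ + xₕ)))
        ∂sliceMeasure b₀ b₀ₕ bₕ β < ∞ := by
    intro xₕ
    refine (lintegral_mono_ae (g := 1) ?_).trans_lt (by simp)
    filter_upwards [sliceMeasure_ae_pos] with s hs
    exact mul_le_one'
      (ENNReal.ofReal_le_one.2 (mul_mul_exp_neg_mul_add_le_one hκ.le (add_pos hs.1 hs.2.1).le))
      (ENNReal.ofReal_le_one.2 (mul_mul_exp_neg_mul_add_le_one hκ.le (add_pos hs.2.1 hs.2.2).le))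
  rw [setIntegral_congr_fun measurableSet_Ioi fun xₕ hxₕ ↦ mul_mul_integral_sliceMeasure hx₀
      (le_of_lt hxₕ), integral_toReal (by fun_prop) (ae_of_all _ h_fin),
    lintegral_lintegral_swap_const_mul (by fun_prop) (by fun_prop)]
  congr 1
  refine lintegral_congr_ae ?_
  filter_upwards [sliceMeasure_ae_pos] with s hs
  rw [lintegral_Ioi_mul_mul_exp_neg_mul_add (add_pos hs.2.1 hs.2.2)]

theorem integral_integral_mul_integral_sliceMeasure (hβ : 0 < β) (hb₀ : 0 < b₀)
    (hb₀ₕ : 0 < b₀ₕ) (hbₕ : 0 < bₕ) (hκ : 0 < κ) :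
    (∫ x₀ in Ioi (0 : ℝ), ∫ xₕ in Ioi (0 : ℝ),
        x₀ * xₕ * ∫ s : ℝ × ℝ × ℝ, (s.1 + s.2.1) * (s.2.1 + s.2.2) *
          exp (-(s.1 + s.2.1) * (κ + x₀) - (s.2.1 + s.2.2) * (κ + xₕ))
          ∂sliceMeasure b₀ b₀ₕ bₕ β)
      = (∫⁻ s, ENNReal.ofReal (exp (-(κ * (s.1 + s.2.1))) / (s.1 + s.2.1))
          * ENNReal.ofReal (exp (-(κ * (s.2.1 + s.2.2))) / (s.2.1 + s.2.2))
          ∂sliceMeasure b₀ b₀ₕ bₕ β).toReal := by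
  rw [setIntegral_congr_fun measurableSet_Ioi fun x₀ hx₀ ↦
    integral_mul_mul_integral_sliceMeasure hβ hb₀ hb₀ₕ hbₕ hκ (le_of_lt hx₀)]
  refine integral_toReal_lintegral_sliceMeasure hβ hb₀ hb₀ₕ hbₕ measurableSet_Ioi (by simp)
    (φ := fun x t ↦ ENNReal.ofReal (x * t * exp (-t * (κ + x)))) (by fun_prop)
    (fun t ht ↦ lintegral_Ioi_mul_mul_exp_neg_mul_add ht κ)
    (fun x _ t ht ↦ ENNReal.ofReal_le_one.2 (mul_mul_exp_neg_mul_add_le_one hκ.le ht.le))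
    (fun x (hx : 0 < x) ↦ ?_) (by fun_prop)
    (fun t ht ↦ ENNReal.ofReal_le_one.2 (exp_neg_mul_div_le_one hκ.le ht.le)) ENNReal.one_ne_top
  refine ⟨ENNReal.ofReal (x * 1 * exp (-3 * (κ + x))), (ENNReal.ofReal_pos.2 (by positivity)).ne',
    fun t ht ↦ ENNReal.ofReal_le_ofReal ?_⟩
  gcongr
  all_goals nlinarith [ht.1, ht.2]

theorem integral_exp_neg_mul_div_sliceMeasure :
    ∫ s, exp (-κ * ((s.1 + s.2.1) + (s.2.1 + s.2.2))) / ((s.1 + s.2.1) * (s.2.1 + s.2.2))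
        ∂sliceMeasure b₀ b₀ₕ bₕ β
      = (∫⁻ s, ENNReal.ofReal (exp (-(κ * (s.1 + s.2.1))) / (s.1 + s.2.1))
          * ENNReal.ofReal (exp (-(κ * (s.2.1 + s.2.2))) / (s.2.1 + s.2.2))
          ∂sliceMeasure b₀ b₀ₕ bₕ β).toReal := by
  rw [integral_eq_lintegral_of_nonneg_ae ?_ (by fun_prop : Measurable _).aestronglyMeasurable]
  · congr 1
    refine lintegral_congr_ae ?_
    filter_upwards [sliceMeasure_ae_pos] with s hs
    have hΛ₀ : 0 < s.1 + s.2.1 := add_pos hs.1 hs.2.1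
    rw [← ENNReal.ofReal_mul (by positivity), div_mul_div_comm, ← exp_add]
    ring_nf
  · filter_upwards [sliceMeasure_ae_pos] with s hs
    have hΛ₀ : 0 < s.1 + s.2.1 := add_pos hs.1 hs.2.1
    have hΛₕ : 0 < s.2.1 + s.2.2 := add_pos hs.2.1 hs.2.2
    positivity

end Slice

/-- Second moment of the exceedance process in the latent trawl model: with
`Λ₀ = S₀ + S₀ₕ`, `Λₕ = S₀ₕ + Sₕ` in the slice model and `κ > 0`,
`E[X₀Xₕ] = ∫₀^∞∫₀^∞ x₀ xₕ E[Λ₀Λₕ e^{-Λ₀(κ+x₀) - Λₕ(κ+xₕ)}] dx₀ dxₕ`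
`= ∫_κ^∞∫_κ^∞ (1+u₀/β)^{-b₀}(1+(u₀+uₕ)/β)^{-b₀ₕ}(1+uₕ/β)^{-bₕ} du₀ duₕ`,
and equivalently `E[e^{-κ(Λ₀+Λₕ)}/(Λ₀Λₕ)]` equals the same double integral. -/
theorem exceedance_second_moment (β b₀ b₀ₕ bₕ κ : ℝ) (hβ : 0 < β)
    (hb₀ : 0 < b₀) (hb₀ₕ : 0 < b₀ₕ) (hbₕ : 0 < bₕ) (hκ : 0 < κ) :
    (∫ x₀ in Ioi (0 : ℝ), ∫ xₕ in Ioi (0 : ℝ),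
        x₀ * xₕ *
          ∫ s : ℝ × ℝ × ℝ, (s.1 + s.2.1) * (s.2.1 + s.2.2) *
            Real.exp (-(s.1 + s.2.1) * (κ + x₀) - (s.2.1 + s.2.2) * (κ + xₕ))
            ∂(sliceMeasure b₀ b₀ₕ bₕ β))
      = (∫ u₀ in Ioi κ, ∫ uₕ in Ioi κ,
          (1 + u₀ / β) ^ (-b₀) * (1 + (u₀ + uₕ) / β) ^ (-b₀ₕ) * (1 + uₕ / β) ^ (-bₕ))
    ∧ (∫ s : ℝ × ℝ × ℝ,
          Real.exp (-κ * ((s.1 + s.2.1) + (s.2.1 + s.2.2)))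
            / ((s.1 + s.2.1) * (s.2.1 + s.2.2)) ∂(sliceMeasure b₀ b₀ₕ bₕ β))
      = (∫ u₀ in Ioi κ, ∫ uₕ in Ioi κ,
          (1 + u₀ / β) ^ (-b₀) * (1 + (u₀ + uₕ) / β) ^ (-b₀ₕ) * (1 + uₕ / β) ^ (-bₕ)) := by
  have h_rhs := integral_integral_sliceLaplace hβ hb₀ hb₀ₕ hbₕ hκ
  exact ⟨(integral_integral_mul_integral_sliceMeasure hβ hb₀ hb₀ₕ hbₕ hκ).trans h_rhs.symm,
    integral_exp_neg_mul_div_sliceMeasure.trans h_rhs.symm⟩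
end

section
/- Conditional tail dependence function of the latent trawl model: in the slice model with κ > 0 and b₀ = bₕ, for all u₁, u₂ ∈ [0,1), writing y₁ = F₂ₑ⁻¹(u₁) and y₂ = F₂ₑ⁻¹(u₂), the ratio (∫_{ℝ³} exp(−(κ+y₁)Λ₀ − (κ+y₂)Λₕ) dμ) / (∫_{ℝ³} exp(−(κ+y₁)Λ₀ − κΛₕ) dμ) equals (1 + y₂/(β + 2κ + y₁))^{−b₀ₕ} (1 + y₂/(β + κ))^{−bₕ}. The left-hand side is the conditional probability P(F₂ₑ(X_h) > u₂ | F₂ₑ(X₀) > u₁, X₀ > 0, X_h > 0) in the latent trawl model. -/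
open MeasureTheory ProbabilityTheory Real Set

/-!
Under the slice measure the three slices are independent Gamma variables, and
`(κ + y₁) Λ₀ + c Λₕ = (κ + y₁) S₀ + (κ + y₁ + c) S₀ₕ + c Sₕ`.  Both integrals therefore
factor into three Gamma Laplace transforms `E[e^{-t S}] = (β / (β + t))^b`; in the ratio
the `S₀` factors cancel and the other two give the stated powers.
-/

lemma integral_gammaMeasure {a r : ℝ} (ha : 0 < a) (hr : 0 < r) (f : ℝ → ℝ) :
    ∫ x, f x ∂gammaMeasure a r = ∫ x in Ioi 0, gammaPDFReal a r x * f x := by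
  have hmeas : Measurable (gammaPDF a r) := (measurable_gammaPDFReal a r).ennreal_ofReal
  rw [gammaMeasure, integral_withDensity_eq_integral_toReal_smul hmeas
    (ae_of_all _ fun _ ↦ ENNReal.ofReal_lt_top),
    ← integral_Ici_eq_integral_Ioi, setIntegral_eq_integral_of_forall_compl_eq_zero]
  · simp only [gammaPDF, ENNReal.toReal_ofReal (gammaPDFReal_nonneg ha hr _), smul_eq_mul]
  · intro x (hx : ¬0 ≤ x)
    rw [gammaPDFReal, if_neg hx, zero_mul]

lemma integral_exp_neg_mul_gammaMeasure {a r t : ℝ} (ha : 0 < a) (hr : 0 < r)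
    (hrt : 0 < r + t) :
    ∫ x, exp (-(t * x)) ∂gammaMeasure a r = (r / (r + t)) ^ a := by
  rw [integral_gammaMeasure ha hr]
  calc ∫ x in Ioi 0, gammaPDFReal a r x * exp (-(t * x))
      = ∫ x in Ioi 0, r ^ a / Gamma a * (x ^ (a - 1) * exp (-((r + t) * x))) := by
        refine setIntegral_congr_fun measurableSet_Ioi fun x (hx : 0 < x) ↦ ?_
        rw [gammaPDFReal, if_pos hx.le, mul_assoc, mul_assoc, ← exp_add]
        ring_nf
    _ = r ^ a / Gamma a * ((1 / (r + t)) ^ a * Gamma a) := by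
        rw [integral_const_mul, integral_rpow_mul_exp_neg_mul_Ioi ha hrt]
    _ = (r / (r + t)) ^ a := by
        have := (Gamma_pos_of_pos ha).ne'
        rw [div_rpow hr.le hrt.le, div_rpow zero_le_one hrt.le, one_rpow]
        field_simp

lemma integral_exp_neg_mul_add_mul_sliceMeasure {b₀ b₀ₕ bₕ β p q : ℝ} (hb₀ : 0 < b₀)
    (hb₀ₕ : 0 < b₀ₕ) (hbₕ : 0 < bₕ) (hβ : 0 < β) (hp : 0 < β + p) (hpq : 0 < β + (p + q))
    (hq : 0 < β + q) :
    ∫ s, exp (-p * (s.1 + s.2.1) - q * (s.2.1 + s.2.2)) ∂sliceMeasure b₀ b₀ₕ bₕ β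
      = (β / (β + p)) ^ b₀ * ((β / (β + (p + q))) ^ b₀ₕ * (β / (β + q)) ^ bₕ) := by
  have := isProbabilityMeasure_gammaMeasure hb₀ hβ
  have := isProbabilityMeasure_gammaMeasure hb₀ₕ hβ
  have := isProbabilityMeasure_gammaMeasure hbₕ hβ
  have hsplit : ∀ s : ℝ × ℝ × ℝ, exp (-p * (s.1 + s.2.1) - q * (s.2.1 + s.2.2))
      = exp (-(p * s.1)) * (exp (-((p + q) * s.2.1)) * exp (-(q * s.2.2))) := fun s ↦ by
    rw [← exp_add, ← exp_add]
    ring_nf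
  simp_rw [hsplit, sliceMeasure]
  rw [integral_prod_mul (f := fun x ↦ exp (-(p * x)))
      (g := fun y : ℝ × ℝ ↦ exp (-((p + q) * y.1)) * exp (-(q * y.2))),
    integral_prod_mul (f := fun x ↦ exp (-((p + q) * x))) (g := fun x ↦ exp (-(q * x))),
    integral_exp_neg_mul_gammaMeasure hb₀ hβ hp, integral_exp_neg_mul_gammaMeasure hb₀ₕ hβ hpq,
    integral_exp_neg_mul_gammaMeasure hbₕ hβ hq]

lemma one_add_div_rpow_neg {x d a : ℝ} (hd : 0 < d) (hdx : 0 < d + x) :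
    (1 + x / d) ^ (-a) = (d / (d + x)) ^ a := by
  rw [show 1 + x / d = (d + x) / d by field_simp, rpow_neg (div_pos hdx hd).le,
    ← inv_rpow (div_pos hdx hd).le, inv_div]

theorem conditional_tail_dependence_function_general (β b₀ b₀ₕ bₕ κ : ℝ) (hβ : 0 < β)
    (hb₀ : 0 < b₀) (hb₀ₕ : 0 < b₀ₕ) (hbₕ : 0 < bₕ) (hκ : 0 < κ)
    (F₂ₑ : ℝ → ℝ)
    (Finv : ℝ → ℝ)
    (hFinv : ∀ u ∈ Ico (0 : ℝ) 1, 0 ≤ Finv u ∧ F₂ₑ (Finv u) = u) :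
    ∀ u₁ ∈ Ico (0 : ℝ) 1, ∀ u₂ ∈ Ico (0 : ℝ) 1,
      (∫ s : ℝ × ℝ × ℝ,
          Real.exp (-(κ + Finv u₁) * (s.1 + s.2.1) - (κ + Finv u₂) * (s.2.1 + s.2.2))
          ∂(sliceMeasure b₀ b₀ₕ bₕ β))
        / (∫ s : ℝ × ℝ × ℝ,
          Real.exp (-(κ + Finv u₁) * (s.1 + s.2.1) - κ * (s.2.1 + s.2.2))
          ∂(sliceMeasure b₀ b₀ₕ bₕ β))
      = (1 + Finv u₂ / (β + 2 * κ + Finv u₁)) ^ (-b₀ₕ)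
          * (1 + Finv u₂ / (β + κ)) ^ (-bₕ) := by
  intro u₁ hu₁ u₂ hu₂
  have hy₁ := (hFinv u₁ hu₁).1
  have hy₂ := (hFinv u₂ hu₂).1
  have hΛ := fun q (hq : 0 ≤ q) ↦ integral_exp_neg_mul_add_mul_sliceMeasure (p := κ + Finv u₁)
    (q := q) hb₀ hb₀ₕ hbₕ hβ (by positivity) (by positivity) (by positivity)
  rw [hΛ _ (by positivity), hΛ _ hκ.le, mul_div_mul_left _ _ (by positivity), mul_div_mul_comm,
    ← div_rpow (by positivity) (by positivity), ← div_rpow (by positivity) (by positivity),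
    div_div_div_cancel_left' _ _ hβ.ne', div_div_div_cancel_left' _ _ hβ.ne',
    one_add_div_rpow_neg (by positivity) (by positivity),
    one_add_div_rpow_neg (by positivity) (by positivity)]
  congr 2 <;> ring

/-- Conditional tail dependence function of the latent trawl model: with
`Λ₀ = S₀ + S₀ₕ`, `Λₕ = S₀ₕ + Sₕ` in the slice model, `κ > 0`, `b₀ = bₕ`, and writing
`y₁ = F₂ₑ⁻¹(u₁)`, `y₂ = F₂ₑ⁻¹(u₂)`, for all `u₁, u₂ ∈ [0,1)`,
`P(F₂ₑ(Xₕ) > u₂ | F₂ₑ(X₀) > u₁, X₀ > 0, Xₕ > 0)`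
`= E[e^{-(κ+y₁)Λ₀ - (κ+y₂)Λₕ}] / E[e^{-(κ+y₁)Λ₀ - κΛₕ}]`
`= (1 + y₂/(β + 2κ + y₁))^{-b₀ₕ} (1 + y₂/(β+κ))^{-bₕ}`. -/
theorem conditional_tail_dependence_function (β b₀ b₀ₕ bₕ κ : ℝ) (hβ : 0 < β)
    (hb₀ : 0 < b₀) (hb₀ₕ : 0 < b₀ₕ) (hbₕ : 0 < bₕ) (hκ : 0 < κ) (hbb : b₀ = bₕ)
    (F₂ₑ : ℝ → ℝ)
    (hF : ∀ x : ℝ, F₂ₑ x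
      = 1 - (1 + x / (β + 2 * κ)) ^ (-b₀ₕ) * (1 + x / (β + κ)) ^ (-b₀))
    (Finv : ℝ → ℝ)
    (hFinv : ∀ u ∈ Ico (0 : ℝ) 1, 0 ≤ Finv u ∧ F₂ₑ (Finv u) = u) :
    ∀ u₁ ∈ Ico (0 : ℝ) 1, ∀ u₂ ∈ Ico (0 : ℝ) 1,
      (∫ s : ℝ × ℝ × ℝ,
          Real.exp (-(κ + Finv u₁) * (s.1 + s.2.1) - (κ + Finv u₂) * (s.2.1 + s.2.2))
          ∂(sliceMeasure b₀ b₀ₕ bₕ β))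
        / (∫ s : ℝ × ℝ × ℝ,
          Real.exp (-(κ + Finv u₁) * (s.1 + s.2.1) - κ * (s.2.1 + s.2.2))
          ∂(sliceMeasure b₀ b₀ₕ bₕ β))
      = (1 + Finv u₂ / (β + 2 * κ + Finv u₁)) ^ (-b₀ₕ)
          * (1 + Finv u₂ / (β + κ)) ^ (-bₕ) :=
  conditional_tail_dependence_function_general β b₀ b₀ₕ bₕ κ hβ hb₀ hb₀ₕ hbₕ hκ F₂ₑ Finv hFinv
end

section
/- Symmetry of the bivariate conditional exceedance distribution (Lemma on F₂ₑ): in the slice model with κ > 0 and b₀ = bₕ, for every x ≥ 0, ∫_{ℝ³} exp(−(κ+x)Λ₀ − κΛₕ) dμ = ∫_{ℝ³} exp(−κΛ₀ − (κ+x)Λₕ) dμ. Consequently, in the latent trawl model, P(X₀ ≤ x | X₀ > 0, X_h > 0) = P(X_h ≤ x | X₀ > 0, X_h > 0). -/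
/-!
When `b₀ = bₕ` the slice measure is invariant under the reversal `(s₀, s₂, s₃) ↦ (s₃, s₂, s₀)`
of coordinates, which exchanges `Λ₀` and `Λₕ` and hence the two integrands.
-/

open MeasureTheory ProbabilityTheory Real Set

instance (a r : ℝ) : SFinite (gammaMeasure a r) := by
  unfold gammaMeasure; infer_instance

section Reverse

variable {α β γ : Type*} [MeasurableSpace α] [MeasurableSpace β] [MeasurableSpace γ]

def MeasurableEquiv.prodReverse : α × β × γ ≃ᵐ γ × β × α :=
  (MeasurableEquiv.prodAssoc.symm.trans MeasurableEquiv.prodComm).trans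
    (MeasurableEquiv.prodCongr (MeasurableEquiv.refl γ) MeasurableEquiv.prodComm)

@[simp]
theorem MeasurableEquiv.prodReverse_apply (s : α × β × γ) :
    MeasurableEquiv.prodReverse s = (s.2.2, s.2.1, s.1) := rfl

theorem measurePreserving_prodReverse (μ : Measure α) (ν : Measure β) (ρ : Measure γ)
    [SFinite μ] [SFinite ν] [SFinite ρ] :
    MeasurePreserving MeasurableEquiv.prodReverse (μ.prod (ν.prod ρ)) (ρ.prod (ν.prod μ)) :=
  ((measurePreserving_prodAssoc μ ν ρ).symm.trans Measure.measurePreserving_swap).trans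
    ((MeasurePreserving.id ρ).prod Measure.measurePreserving_swap)

end Reverse

theorem conditional_df_symmetry_general (β b₀ b₀ₕ bₕ κ : ℝ) (hbb : b₀ = bₕ) :
    ∀ x : ℝ, 0 ≤ x →
      (∫ s : ℝ × ℝ × ℝ,
          Real.exp (-(κ + x) * (s.1 + s.2.1) - κ * (s.2.1 + s.2.2))
          ∂(sliceMeasure b₀ b₀ₕ bₕ β))
        = (∫ s : ℝ × ℝ × ℝ,
          Real.exp (-κ * (s.1 + s.2.1) - (κ + x) * (s.2.1 + s.2.2))
          ∂(sliceMeasure b₀ b₀ₕ bₕ β)) := by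
  subst hbb
  intro x _
  rw [sliceMeasure, ← (measurePreserving_prodReverse _ _ _).integral_comp']
  congr with s
  rw [MeasurableEquiv.prodReverse_apply]
  ring_nf

/-- Symmetry of the bivariate conditional exceedance distribution: with
`Λ₀ = S₀ + S₀ₕ`, `Λₕ = S₀ₕ + Sₕ` in the slice model, `κ > 0` and `b₀ = bₕ`,
for all `x ≥ 0`, `E[e^{-(κ+x)Λ₀ - κΛₕ}] = E[e^{-κΛ₀ - (κ+x)Λₕ}]`; consequently
`P(X₀ ≤ x | X₀ > 0, Xₕ > 0) = P(Xₕ ≤ x | X₀ > 0, Xₕ > 0)` in the latent trawl model. -/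
theorem conditional_df_symmetry (β b₀ b₀ₕ bₕ κ : ℝ) (hβ : 0 < β)
    (hb₀ : 0 < b₀) (hb₀ₕ : 0 < b₀ₕ) (hbₕ : 0 < bₕ) (hκ : 0 < κ) (hbb : b₀ = bₕ) :
    ∀ x : ℝ, 0 ≤ x →
      (∫ s : ℝ × ℝ × ℝ,
          Real.exp (-(κ + x) * (s.1 + s.2.1) - κ * (s.2.1 + s.2.2))
          ∂(sliceMeasure b₀ b₀ₕ bₕ β))
        = (∫ s : ℝ × ℝ × ℝ,
          Real.exp (-κ * (s.1 + s.2.1) - (κ + x) * (s.2.1 + s.2.2))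
          ∂(sliceMeasure b₀ b₀ₕ bₕ β)) :=
  conditional_df_symmetry_general β b₀ b₀ₕ bₕ κ hbb
end

section
/- Asymptotic independence of the latent trawl model: let β, κ > 0, b₀ = bₕ > 0 and b₀ₕ ≥ 0, and define φ(u₁, u₂) = (1 + F₂ₑ⁻¹(u₂)/(β + 2κ + F₂ₑ⁻¹(u₁)))^{−b₀ₕ} (1 + F₂ₑ⁻¹(u₂)/(β+κ))^{−bₕ} for u₁, u₂ ∈ [0,1). Then the conditional tail dependence coefficient vanishes: φ(u, u) → 0 as u → 1 from the left. -/
/-!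
Write `x = F₂ₑ⁻¹(u)`, `B = 1 + x/(β+κ)` and `C = 1 + x/(β+2κ)`, so that `1 - u = C^{-b₀ₕ} B^{-b₀}`.
The first factor of `φ(u, u)` is at most `1`, hence `φ(u, u) ≤ B^{-b₀}`. Since `C ≤ B`,
`1 - u ≥ B^{-(b₀ₕ+b₀)}`, i.e. `B^{-b₀} ≤ (1 - u)^{b₀/(b₀ₕ+b₀)}`, which tends to `0` as `u ↑ 1`.
-/

open Real Set Filter Topology

lemma tendsto_one_sub_rpow_nhdsLT_one {r : ℝ} (hr : 0 < r) :
    Tendsto (fun u : ℝ => (1 - u) ^ r) (𝓝[<] 1) (𝓝 0) := by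
  have h := ((continuous_const.sub continuous_id).rpow_const
    fun _ => Or.inr hr.le : Continuous fun u : ℝ => (1 - u) ^ r).tendsto 1
  simpa [zero_rpow hr.ne'] using h.mono_left nhdsWithin_le_nhds

lemma rpow_neg_le_mul_rpow_neg_rpow {B C p q : ℝ} (hC : 0 < C) (hCB : C ≤ B) (hp : 0 ≤ p)
    (hq : 0 < q) : B ^ (-q) ≤ (C ^ (-p) * B ^ (-q)) ^ (q / (p + q)) := by
  have hB : 0 < B := hC.trans_le hCB
  have hpq : 0 < p + q := by linarith
  calc B ^ (-q) = (B ^ (-p) * B ^ (-q)) ^ (q / (p + q)) := by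
        rw [← rpow_add hB, ← rpow_mul hB.le]
        congr 1
        field_simp
        ring
    _ ≤ (C ^ (-p) * B ^ (-q)) ^ (q / (p + q)) := by
        gcongr (?_ * _) ^ _
        exact rpow_le_rpow_of_nonpos hC hCB (neg_nonpos.mpr hp)

/-- Asymptotic independence of the latent trawl model: with `β, κ > 0`,
`b₀ = bₕ > 0`, `b₀ₕ ≥ 0`, and conditional tail dependence function
`φ(u₁, u₂) = (1 + F₂ₑ⁻¹(u₂)/(β + 2κ + F₂ₑ⁻¹(u₁)))^{-b₀ₕ} (1 + F₂ₑ⁻¹(u₂)/(β+κ))^{-bₕ}`,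
the conditional tail dependence coefficient vanishes: `φ(u, u) → 0` as `u ↑ 1`. -/
theorem conditional_tail_dependence_coefficient_zero (β κ b₀ b₀ₕ bₕ : ℝ)
    (hβ : 0 < β) (hκ : 0 < κ) (hb₀ : 0 < b₀) (hbb : b₀ = bₕ) (hb₀ₕ : 0 ≤ b₀ₕ)
    (F₂ₑ : ℝ → ℝ)
    (hF : ∀ x : ℝ, F₂ₑ x
      = 1 - (1 + x / (β + 2 * κ)) ^ (-b₀ₕ) * (1 + x / (β + κ)) ^ (-b₀))
    (Finv : ℝ → ℝ)
    (hFinv : ∀ u ∈ Ico (0 : ℝ) 1, 0 ≤ Finv u ∧ F₂ₑ (Finv u) = u)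
    (φ : ℝ → ℝ → ℝ)
    (hφ : ∀ u₁ ∈ Ico (0 : ℝ) 1, ∀ u₂ ∈ Ico (0 : ℝ) 1,
      φ u₁ u₂ = (1 + Finv u₂ / (β + 2 * κ + Finv u₁)) ^ (-b₀ₕ)
          * (1 + Finv u₂ / (β + κ)) ^ (-bₕ)) :
    Tendsto (fun u => φ u u) (nhdsWithin 1 (Iio 1)) (nhds 0) := by
  have hmem : ∀ᶠ u in 𝓝[<] (1 : ℝ), u ∈ Ico (0 : ℝ) 1 := Ico_mem_nhdsLT one_pos
  refine tendsto_of_tendsto_of_tendsto_of_le_of_le' tendsto_const_nhds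
    (tendsto_one_sub_rpow_nhdsLT_one (by positivity : 0 < b₀ / (b₀ₕ + b₀))) ?_ ?_
  · filter_upwards [hmem] with u hu
    have hx := (hFinv u hu).1
    rw [hφ u hu u hu]
    positivity
  · filter_upwards [hmem] with u hu
    obtain ⟨hx, hFx⟩ := hFinv u hu
    have h1u : 1 - u = (1 + Finv u / (β + 2 * κ)) ^ (-b₀ₕ) * (1 + Finv u / (β + κ)) ^ (-b₀) := by
      linarith [hF (Finv u)]
    have hCB : 1 + Finv u / (β + 2 * κ) ≤ 1 + Finv u / (β + κ) := by
      gcongr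
      linarith
    rw [hφ u hu u hu, ← hbb, h1u]
    calc _ ≤ (1 + Finv u / (β + κ)) ^ (-b₀) :=
          mul_le_of_le_one_left (by positivity)
            (rpow_le_one_of_one_le_of_nonpos (by simp only [le_add_iff_nonneg_right]; positivity)
              (neg_nonpos.mpr hb₀ₕ))
      _ ≤ _ := rpow_neg_le_mul_rpow_neg_rpow (by positivity) hCB hb₀ₕ hb₀
end
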